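/- arXiv:math/0605176 — 6 statements merged into one kernel-verified Lean document; each statement's English description precedes it below -/
import Mathlib

section
/- Let C ⊆ F_2^n be an even binary linear code and β ∈ F_2^n. Let C_β = {γ ∈ C : supp(γ) ⊆ supp(β)}, let R = {x ∈ C_β : ⟨x,y⟩ = 0 for all y ∈ C_β} be the radical of C_β, and let H be a maximal self-orthogonal subcode of C_β. Then C_β + H^{⊥_β} = R^{⊥_β}; in particular C + H^{⊥_β} = C + R^{⊥_β} is independent of the choice of the maximal self-orthogonal subcode H. -/
/-- The weight of a binary vector: the number of nonzero coordinates. -/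
def wt {n : ℕ} (α : Fin n → ZMod 2) : ℕ :=
  (Finset.univ.filter (fun i => α i ≠ 0)).card

/-- The standard bilinear form `⟨α,β⟩ = ∑ i, α i * β i` on `F_2^n`. -/
def ip {n : ℕ} (α β : Fin n → ZMod 2) : ZMod 2 := ∑ i, α i * β i

/-- The support of a binary vector. -/
def supp {n : ℕ} (α : Fin n → ZMod 2) : Set (Fin n) := {i | α i ≠ 0}

/-- `H^{⊥_β}`: vectors with support inside `supp β` orthogonal to every element of `H`. -/
def perpWrt {n : ℕ} (β : Fin n → ZMod 2) (H : Set (Fin n → ZMod 2)) :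
    Set (Fin n → ZMod 2) :=
  {δ | supp δ ⊆ supp β ∧ ∀ h ∈ H, ip δ h = 0}

/-!
Work inside `V = {v : supp v ⊆ supp β}`, on which the dot product is nondegenerate, so `N ↦ V ⊓ N^⊥`
is an involution on subspaces of `V`. Adding the radical `R = C_β ⊓ C_β^⊥` to `H` keeps it
self-orthogonal, so maximality gives `R ≤ H`. Then the relative orthogonal of `C_β + H^{⊥_β}` is
`C_β^⊥ ⊓ H = R`, and taking relative orthogonals once more gives `C_β + H^{⊥_β} = R^{⊥_β}`.
Since `C_β ≤ C`, adding `C` to both sides yields the second identity.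
-/

namespace LinearMap.BilinForm

section CommSemiring

variable {R M : Type*} [CommSemiring R] [AddCommMonoid M] [Module R M]
  {B : LinearMap.BilinForm R M}

theorem orthogonal_sup (N L : Submodule R M) :
    B.orthogonal (N ⊔ L) = B.orthogonal N ⊓ B.orthogonal L := by
  refine le_antisymm (le_inf (orthogonal_le le_sup_left) (orthogonal_le le_sup_right)) ?_
  rintro m ⟨hN, hL⟩ x hx
  obtain ⟨y, hy, z, hz, rfl⟩ := Submodule.mem_sup.mp hx
  rw [map_add, LinearMap.add_apply, hN y hy, hL z hz, add_zero]

theorem inf_orthogonal_le_of_maximal_isotropic (hB : B.IsRefl) {C H : Submodule R M}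
    (hHC : H ≤ C) (hH : H ≤ B.orthogonal H)
    (hmax : ∀ L, L ≤ C → L ≤ B.orthogonal L → H ≤ L → L = H) :
    C ⊓ B.orthogonal C ≤ H := by
  have hrad : C ⊓ B.orthogonal C ≤ B.orthogonal H := inf_le_right.trans (orthogonal_le hHC)
  have hiso : H ⊔ C ⊓ B.orthogonal C ≤ B.orthogonal (H ⊔ C ⊓ B.orthogonal C) := by
    rw [orthogonal_sup]
    refine sup_le (le_inf hH ((le_orthogonal_orthogonal hB).trans (orthogonal_le hrad)))
      (le_inf hrad (inf_le_right.trans (orthogonal_le inf_le_left)))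
  rw [← hmax _ (sup_le hHC inf_le_left) hiso le_sup_left]
  exact le_sup_right

theorem inf_orthogonal_map_subtype (V : Submodule R M) (X : Submodule R V) :
    V ⊓ B.orthogonal (X.map V.subtype) = ((B.restrict V).orthogonal X).map V.subtype := by
  ext m
  constructor
  · rintro ⟨hmV, hm⟩
    exact ⟨⟨m, hmV⟩, fun x hx => hm x (Submodule.mem_map_of_mem hx), rfl⟩
  · rintro ⟨v, hv, rfl⟩
    refine ⟨v.2, ?_⟩
    rintro _ ⟨x, hx, rfl⟩
    exact hv x hx

end CommSemiring

variable {K M : Type*} [Field K] [AddCommGroup M] [Module K M] [FiniteDimensional K M]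
  {B : LinearMap.BilinForm K M}

theorem inf_orthogonal_inf_orthogonal (hB : B.IsRefl) {V N : Submodule K M}
    (hV : (B.restrict V).Nondegenerate) (hNV : N ≤ V) :
    V ⊓ B.orthogonal (V ⊓ B.orthogonal N) = N := by
  have hN : (N.comap V.subtype).map V.subtype = N := by
    rw [Submodule.map_comap_subtype, inf_eq_right.mpr hNV]
  rw [← hN, inf_orthogonal_map_subtype, inf_orthogonal_map_subtype,
    orthogonal_orthogonal hV (hB.domRestrict V)]

theorem sup_inf_orthogonal_eq (hB : B.IsRefl) {V C H : Submodule K M}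
    (hV : (B.restrict V).Nondegenerate) (hCV : C ≤ V) (hHC : H ≤ C)
    (hrad : C ⊓ B.orthogonal C ≤ H) :
    C ⊔ V ⊓ B.orthogonal H = V ⊓ B.orthogonal (C ⊓ B.orthogonal C) := by
  have hperp : V ⊓ B.orthogonal (C ⊔ V ⊓ B.orthogonal H) = C ⊓ B.orthogonal C := by
    rw [orthogonal_sup, inf_left_comm, inf_orthogonal_inf_orthogonal hB hV (hHC.trans hCV)]
    exact le_antisymm (le_inf (inf_le_right.trans hHC) inf_le_left) (le_inf inf_le_right hrad)
  rw [← hperp, inf_orthogonal_inf_orthogonal hB hV (sup_le hCV inf_le_left)]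

end LinearMap.BilinForm

open LinearMap (BilinForm)

theorem Submodule.setOf_exists_add_eq_coe_sup {R M : Type*} [Semiring R] [AddCommMonoid M]
    [Module R M] (P Q : Submodule R M) :
    {x | ∃ a ∈ (P : Set M), ∃ b ∈ (Q : Set M), x = a + b} = ↑(P ⊔ Q) := by
  ext x
  simp [Submodule.mem_sup, eq_comm]

section BinaryCode

variable {n : ℕ}

def ipForm : BilinForm (ZMod 2) (Fin n → ZMod 2) := dotProductBilin (ZMod 2) (ZMod 2)

@[simp]
theorem ipForm_apply (x y : Fin n → ZMod 2) : ipForm x y = ip x y := rfl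

theorem ip_comm (x y : Fin n → ZMod 2) : ip x y = ip y x := dotProduct_comm x y

theorem ipForm_isRefl : (ipForm : BilinForm (ZMod 2) (Fin n → ZMod 2)).IsRefl := fun x y h =>
  (ip_comm y x).trans h

theorem le_ipForm_orthogonal_self_iff (L : Submodule (ZMod 2) (Fin n → ZMod 2)) :
    L ≤ ipForm.orthogonal L ↔ ∀ x ∈ L, ∀ y ∈ L, ip x y = 0 :=
  ⟨fun h x hx _ hy => h hy x hx, fun h y hy x hx => h x hx y hy⟩

def supportedIn (β : Fin n → ZMod 2) : Submodule (ZMod 2) (Fin n → ZMod 2) :=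
  Submodule.pi (supp β)ᶜ fun _ => ⊥

theorem mem_supportedIn {β v : Fin n → ZMod 2} : v ∈ supportedIn β ↔ supp v ⊆ supp β := by
  simp only [supportedIn, Submodule.mem_pi, Submodule.mem_bot, Set.mem_compl_iff, supp,
    Set.subset_def, Set.mem_ofPred_eq]
  exact forall_congr' fun _ => not_imp_comm

theorem ipForm_restrict_supportedIn_nondegenerate (β : Fin n → ZMod 2) :
    (ipForm.restrict (supportedIn β)).Nondegenerate := by
  refine ((ipForm_isRefl.domRestrict _).nondegenerate_iff_separatingLeft).mpr fun v hv => ?_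
  ext i
  by_contra hvi
  have hsingle : Pi.single i 1 ∈ supportedIn β := mem_supportedIn.mpr fun j hj => by
    obtain rfl : j = i := by by_contra hji; exact hj (Pi.single_eq_of_ne hji 1)
    exact mem_supportedIn.mp v.2 hvi
  have h0 : (v : Fin n → ZMod 2) ⬝ᵥ Pi.single i 1 = 0 := hv ⟨Pi.single i 1, hsingle⟩
  rw [dotProduct_single, mul_one] at h0
  exact hvi h0

theorem perpWrt_eq_inf_orthogonal (β : Fin n → ZMod 2)
    (N : Submodule (ZMod 2) (Fin n → ZMod 2)) :
    perpWrt β N = ↑(supportedIn β ⊓ ipForm.orthogonal N) := by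
  ext x
  simp [perpWrt, mem_supportedIn, ip_comm x]

end BinaryCode

open LinearMap.BilinForm in
theorem stmt3_general {n : ℕ} (C : Submodule (ZMod 2) (Fin n → ZMod 2))
    (β : Fin n → ZMod 2)
    (Cβ : Set (Fin n → ZMod 2)) (hCβ : Cβ = {γ | γ ∈ C ∧ supp γ ⊆ supp β})
    (R : Set (Fin n → ZMod 2)) (hR : R = {x | x ∈ Cβ ∧ ∀ y ∈ Cβ, ip x y = 0})
    (H : Submodule (ZMod 2) (Fin n → ZMod 2))
    (hHsub : (H : Set (Fin n → ZMod 2)) ⊆ Cβ)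
    (hHso : ∀ x ∈ H, ∀ y ∈ H, ip x y = 0)
    (hHmax : ∀ K : Submodule (ZMod 2) (Fin n → ZMod 2),
      (K : Set (Fin n → ZMod 2)) ⊆ Cβ → (∀ x ∈ K, ∀ y ∈ K, ip x y = 0) → H ≤ K → K = H) :
    {x | ∃ a ∈ Cβ, ∃ b ∈ perpWrt β (H : Set (Fin n → ZMod 2)), x = a + b} = perpWrt β R ∧
    {x | ∃ a ∈ (C : Set (Fin n → ZMod 2)),
        ∃ b ∈ perpWrt β (H : Set (Fin n → ZMod 2)), x = a + b} =
      {x | ∃ a ∈ (C : Set (Fin n → ZMod 2)), ∃ b ∈ perpWrt β R, x = a + b} := by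
  set D := C ⊓ supportedIn β
  have hCβD : Cβ = D := by
    rw [hCβ]
    ext x
    simp [D, mem_supportedIn]
  subst hCβD
  have hRD : R = ↑(D ⊓ ipForm.orthogonal D) := by
    rw [hR]
    ext x
    simp [ip_comm x]
  subst hRD
  have hDC : D ≤ C := inf_le_left
  have hrad : D ⊓ ipForm.orthogonal D ≤ H :=
    inf_orthogonal_le_of_maximal_isotropic ipForm_isRefl hHsub
      ((le_ipForm_orthogonal_self_iff H).mpr hHso)
      fun L hLD hL hHL => hHmax L hLD ((le_ipForm_orthogonal_self_iff L).mp hL) hHL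
  have key : D ⊔ _ = _ := sup_inf_orthogonal_eq ipForm_isRefl
    (ipForm_restrict_supportedIn_nondegenerate β) inf_le_right hHsub hrad
  simp only [perpWrt_eq_inf_orthogonal, Submodule.setOf_exists_add_eq_coe_sup]
  rw [← key, ← sup_assoc, sup_eq_left.mpr hDC]
  exact ⟨rfl, rfl⟩

theorem stmt3 {n : ℕ} (C : Submodule (ZMod 2) (Fin n → ZMod 2))
    (hCeven : ∀ x ∈ C, 2 ∣ wt x) (β : Fin n → ZMod 2)
    (Cβ : Set (Fin n → ZMod 2)) (hCβ : Cβ = {γ | γ ∈ C ∧ supp γ ⊆ supp β})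
    (R : Set (Fin n → ZMod 2)) (hR : R = {x | x ∈ Cβ ∧ ∀ y ∈ Cβ, ip x y = 0})
    (H : Submodule (ZMod 2) (Fin n → ZMod 2))
    (hHsub : (H : Set (Fin n → ZMod 2)) ⊆ Cβ)
    (hHso : ∀ x ∈ H, ∀ y ∈ H, ip x y = 0)
    (hHmax : ∀ K : Submodule (ZMod 2) (Fin n → ZMod 2),
      (K : Set (Fin n → ZMod 2)) ⊆ Cβ → (∀ x ∈ K, ∀ y ∈ K, ip x y = 0) → H ≤ K → K = H) :
    {x | ∃ a ∈ Cβ, ∃ b ∈ perpWrt β (H : Set (Fin n → ZMod 2)), x = a + b} = perpWrt β R ∧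
    {x | ∃ a ∈ (C : Set (Fin n → ZMod 2)),
        ∃ b ∈ perpWrt β (H : Set (Fin n → ZMod 2)), x = a + b} =
      {x | ∃ a ∈ (C : Set (Fin n → ZMod 2)), ∃ b ∈ perpWrt β R, x = a + b} :=
  stmt3_general C β Cβ hCβ R hR H hHsub hHso hHmax
end

section
/- Let n be divisible by 8 and let H ⊆ F_2^n be a doubly even binary linear code containing the all-one vector (1,1,…,1). Then there exists a doubly even self-dual code H' ⊆ F_2^n (i.e. H' = H'^⊥) with H ⊆ H'. -/
/-- The dual code of a set of vectors. -/
def dualCode {n : ℕ} (S : Set (Fin n → ZMod 2)) : Set (Fin n → ZMod 2) :=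
  {δ | ∀ γ ∈ S, ip δ γ = 0}

/-!
Take a maximal doubly even code `C ⊇ H`. Doubly even codes are self-orthogonal, so `C ⊆ C^⊥`,
and by maximality every `x ∈ C^⊥ \ C` has weight `≡ 2 mod 4` (it is even because `1 ∈ C`).
Hence `∑_{x ∈ C^⊥} i^{wt x} = |C| - |C^⊥ \ C|`. On the other hand, averaging the characters
`x ↦ (-1)^⟨x,c⟩` over `c ∈ C` and factoring over coordinates gives
`∑_{x ∈ C^⊥} i^{wt x} = (1 + i)^n = 16^{n/8} > 0`. If some `v ∈ C^⊥ \ C` existed, `x ↦ x + v`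
would inject `C` into `C^⊥ \ C`, making the sum `≤ 0`; so `C = C^⊥`.
-/

open Finset

section Weight

variable {n : ℕ}

lemma wt_eq_sum_val (x : Fin n → ZMod 2) : wt x = ∑ i, (x i).val := by
  rw [wt, card_eq_sum_ones, sum_filter]
  exact sum_congr rfl fun i _ => by generalize x i = a; revert a; decide

lemma wt_add_add_two_mul_wt_mul (x y : Fin n → ZMod 2) :
    wt (x + y) + 2 * wt (x * y) = wt x + wt y := by
  simp only [wt_eq_sum_val, mul_sum, ← sum_add_distrib, Pi.add_apply, Pi.mul_apply]
  exact sum_congr rfl fun i _ => by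
    generalize x i = a; generalize y i = b; revert a b; decide

lemma sum_eq_cast_wt (x : Fin n → ZMod 2) : ∑ i, x i = (wt x : ZMod 2) := by
  simp [wt_eq_sum_val]

lemma ip_eq_dotProduct (x y : Fin n → ZMod 2) : ip x y = x ⬝ᵥ y := rfl

lemma ip_eq_cast_wt_mul (x y : Fin n → ZMod 2) : ip x y = (wt (x * y) : ZMod 2) :=
  sum_eq_cast_wt (x * y)

lemma four_dvd_wt_add_iff {x y : Fin n → ZMod 2} (hx : 4 ∣ wt x) (hy : 4 ∣ wt y) :
    4 ∣ wt (x + y) ↔ ip x y = 0 := by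
  rw [ip_eq_cast_wt_mul, ZMod.natCast_eq_zero_iff]
  have := wt_add_add_two_mul_wt_mul x y
  omega

lemma add_mem_dualCode {S : Set (Fin n → ZMod 2)} {x y : Fin n → ZMod 2}
    (hx : x ∈ dualCode S) (hy : y ∈ dualCode S) : x + y ∈ dualCode S := fun γ hγ => by
  rw [ip_eq_dotProduct, add_dotProduct, ← ip_eq_dotProduct, hx γ hγ, ← ip_eq_dotProduct, hy γ hγ,
    add_zero]

lemma two_dvd_wt_of_mem_dualCode {S : Set (Fin n → ZMod 2)} (hone : 1 ∈ S)
    {x : Fin n → ZMod 2} (hx : x ∈ dualCode S) : 2 ∣ wt x := by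
  have := hx 1 hone
  rwa [ip_eq_cast_wt_mul, mul_one, ZMod.natCast_eq_zero_iff] at this

end Weight

section DoublyEven

variable {n : ℕ}

def IsDoublyEven (C : Submodule (ZMod 2) (Fin n → ZMod 2)) : Prop := ∀ x ∈ C, 4 ∣ wt x

variable {C : Submodule (ZMod 2) (Fin n → ZMod 2)}

lemma IsDoublyEven.subset_dualCode (hC : IsDoublyEven C) :
    (C : Set (Fin n → ZMod 2)) ⊆ dualCode (C : Set (Fin n → ZMod 2)) :=
  fun x hx y hy => (four_dvd_wt_add_iff (hC x hx) (hC y hy)).1 (hC _ (C.add_mem hx hy))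

lemma IsDoublyEven.sup_span_singleton (hC : IsDoublyEven C) {x : Fin n → ZMod 2}
    (hx : x ∈ dualCode (C : Set (Fin n → ZMod 2))) (h4 : 4 ∣ wt x) :
    IsDoublyEven (C ⊔ Submodule.span (ZMod 2) {x}) := by
  intro y hy
  obtain ⟨c, hc, z, hz, rfl⟩ := Submodule.mem_sup.1 hy
  obtain ⟨a, rfl⟩ := Submodule.mem_span_singleton.1 hz
  rcases (by decide : ∀ a : ZMod 2, a = 0 ∨ a = 1) a with rfl | rfl
  · simpa using hC c hc
  · rw [one_smul, add_comm]
    exact (four_dvd_wt_add_iff h4 (hC c hc)).2 (hx c hc)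

lemma mem_of_maximal_isDoublyEven (hC : Maximal IsDoublyEven C) {x : Fin n → ZMod 2}
    (hx : x ∈ dualCode (C : Set (Fin n → ZMod 2))) (h4 : 4 ∣ wt x) : x ∈ C :=
  hC.2 (hC.1.sup_span_singleton hx h4) le_sup_left
    (Submodule.mem_sup_right (Submodule.mem_span_singleton_self x))

end DoublyEven

section GaussSum

local notation "𝕚" => (Zsqrtd.sqrtd : GaussianInt)

lemma AddChar.map_sum_eq_prod {ι A M : Type*} [AddCommMonoid A] [CommMonoid M]
    (ψ : AddChar A M) (s : Finset ι) (f : ι → A) : ψ (∑ i ∈ s, f i) = ∏ i ∈ s, ψ (f i) :=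
  map_prod ψ.toMonoidHom (fun i => Multiplicative.ofAdd (f i)) s

def signChar : AddChar (ZMod 2) GaussianInt :=
  AddChar.zmodChar 2 (by decide : (-1 : GaussianInt) ^ 2 = 1)

lemma signChar_injective : Function.Injective signChar := by
  intro a b
  revert a b
  simp only [signChar, AddChar.zmodChar_apply]
  decide

lemma sum_I_pow_val_mul_signChar (b : ZMod 2) :
    ∑ a : ZMod 2, 𝕚 ^ a.val * signChar (a * b) = (1 + 𝕚) * (-𝕚) ^ b.val := by
  revert b
  simp only [signChar, AddChar.zmodChar_apply]
  decide

lemma neg_I_pow_of_four_dvd {w : ℕ} (hw : 4 ∣ w) : (-𝕚) ^ w = 1 := by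
  obtain ⟨k, rfl⟩ := hw
  rw [pow_mul, (by decide : (-𝕚) ^ 4 = 1), one_pow]

lemma I_pow_of_two_dvd {w : ℕ} (hw : 2 ∣ w) : 𝕚 ^ w = if 4 ∣ w then 1 else -1 := by
  split_ifs with h4
  · obtain ⟨k, rfl⟩ := h4
    rw [pow_mul, (by decide : 𝕚 ^ 4 = 1), one_pow]
  · obtain ⟨k, rfl⟩ : ∃ k, w = 4 * k + 2 := ⟨w / 4, by omega⟩
    rw [pow_add, pow_mul, (by decide : 𝕚 ^ 4 = 1), one_pow, one_mul]
    decide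

variable {n : ℕ}

open scoped Classical in
lemma sum_signChar_dotProduct (C : Submodule (ZMod 2) (Fin n → ZMod 2)) (x : Fin n → ZMod 2) :
    ∑ c : C, signChar (x ⬝ᵥ c) =
      if x ∈ dualCode (C : Set _) then (Fintype.card C : GaussianInt) else 0 := by
  let ψ := signChar.compAddMonoidHom
    ((dotProductBilin (ZMod 2) (ZMod 2) x).comp C.subtype).toAddMonoidHom
  have hψ : ψ = 0 ↔ x ∈ dualCode (C : Set _) := by
    simp only [AddChar.eq_zero_iff, dualCode, ip_eq_dotProduct, Set.mem_ofPred_eq,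
      SetLike.mem_coe, Subtype.forall]
    refine forall₂_congr fun c _ => ?_
    rw [← signChar_injective.eq_iff, AddChar.map_zero_eq_one]
    rfl
  exact (AddChar.sum_eq_ite ψ).trans (by simp only [hψ])

lemma sum_I_pow_wt_mul_signChar (c : Fin n → ZMod 2) :
    ∑ x, 𝕚 ^ wt x * signChar (x ⬝ᵥ c) = (1 + 𝕚) ^ n * (-𝕚) ^ wt c := by
  have hx : ∀ x : Fin n → ZMod 2,
      𝕚 ^ wt x * signChar (x ⬝ᵥ c) = ∏ i, 𝕚 ^ (x i).val * signChar (x i * c i) := by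
    intro x
    rw [prod_mul_distrib, wt_eq_sum_val, prod_pow_eq_pow_sum, dotProduct,
      AddChar.map_sum_eq_prod]
  rw [sum_congr rfl fun x _ => hx x,
    ← Fintype.prod_sum fun i (a : ZMod 2) => 𝕚 ^ a.val * signChar (a * c i)]
  simp only [sum_I_pow_val_mul_signChar, prod_mul_distrib, prod_const, card_univ,
    Fintype.card_fin, prod_pow_eq_pow_sum, ← wt_eq_sum_val]

open scoped Classical in
theorem IsDoublyEven.sum_dualCode_I_pow_wt {C : Submodule (ZMod 2) (Fin n → ZMod 2)}
    (hC : IsDoublyEven C) :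
    ∑ x ∈ univ.filter (· ∈ dualCode (C : Set (Fin n → ZMod 2))), 𝕚 ^ wt x = (1 + 𝕚) ^ n := by
  refine mul_left_cancel₀ (Nat.cast_ne_zero.2 (Fintype.card_ne_zero (α := C))) ?_
  calc (Fintype.card C : GaussianInt) *
        ∑ x ∈ univ.filter (· ∈ dualCode (C : Set (Fin n → ZMod 2))), 𝕚 ^ wt x
      = ∑ x : Fin n → ZMod 2, 𝕚 ^ wt x * ∑ c : C, signChar (x ⬝ᵥ c) := by
        simp only [mul_sum, sum_filter, sum_signChar_dotProduct]
        exact sum_congr rfl fun x _ => by split_ifs <;> ring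
    _ = ∑ c : C, ∑ x : Fin n → ZMod 2, 𝕚 ^ wt x * signChar (x ⬝ᵥ c) := by
        simp only [mul_sum]
        exact sum_comm
    _ = ∑ c : C, (1 + 𝕚) ^ n := sum_congr rfl fun c _ => by
        rw [sum_I_pow_wt_mul_signChar, neg_I_pow_of_four_dvd (hC c c.2), mul_one]
    _ = Fintype.card C * (1 + 𝕚) ^ n := by simp

open scoped Classical in
lemma I_pow_wt_of_maximal {C : Submodule (ZMod 2) (Fin n → ZMod 2)} (hC : Maximal IsDoublyEven C)
    (hone : 1 ∈ C) {x : Fin n → ZMod 2} (hx : x ∈ dualCode (C : Set (Fin n → ZMod 2))) :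
    𝕚 ^ wt x = if x ∈ C then 1 else -1 := by
  rw [I_pow_of_two_dvd (two_dvd_wt_of_mem_dualCode hone hx)]
  exact if_congr ⟨mem_of_maximal_isDoublyEven hC hx, hC.1 x⟩ rfl rfl

open scoped Classical in
theorem dualCode_subset_of_maximal (h8 : 8 ∣ n) {C : Submodule (ZMod 2) (Fin n → ZMod 2)}
    (hC : Maximal IsDoublyEven C) (hone : 1 ∈ C) :
    dualCode (C : Set (Fin n → ZMod 2)) ⊆ C := by
  intro v hv
  by_contra hvC
  set A := univ.filter (· ∈ C)
  set B := univ.filter (· ∈ dualCode (C : Set (Fin n → ZMod 2)))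
  have hAB : A ⊆ B := monotone_filter_right _ fun _ _ => (hC.1.subset_dualCode ·)
  have hsum : ∑ x ∈ B, 𝕚 ^ wt x = #A - #(B \ A) := by
    have hval : ∀ x ∈ B, 𝕚 ^ wt x = if x ∈ C then 1 else -1 :=
      fun x hx => I_pow_wt_of_maximal hC hone (mem_filter.1 hx).2
    rw [← sum_sdiff hAB, add_comm, sum_congr rfl fun x hx => hval x (hAB hx),
      sum_congr rfl fun x hx => hval x (sdiff_subset hx),
      sum_congr rfl fun x hx => if_pos (mem_filter.1 hx).2,
      sum_congr rfl fun x hx => if_neg fun h => (mem_sdiff.1 hx).2 (mem_filter.2 ⟨mem_univ x, h⟩)]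
    simp only [sum_const, nsmul_eq_mul, mul_one, mul_neg, sub_eq_add_neg]
    rfl
  have hinj : #A ≤ #(B \ A) := by
    refine card_le_card_of_injOn (· + v) (fun x hx => ?_) (fun x _ y _ => add_right_cancel)
    rw [mem_coe] at hx ⊢
    simp only [A, B, mem_filter, mem_univ, true_and, mem_sdiff] at hx ⊢
    refine ⟨add_mem_dualCode (hC.1.subset_dualCode hx) hv, fun h => hvC ?_⟩
    simpa using C.sub_mem h hx
  have h16 : (1 + 𝕚) ^ n = ((16 ^ (n / 8) : ℕ) : GaussianInt) := by
    obtain ⟨k, rfl⟩ := h8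
    rw [pow_mul, (by decide : (1 + 𝕚) ^ 8 = 16), Nat.mul_div_cancel_left _ (by norm_num)]
    norm_cast
  rw [hC.1.sum_dualCode_I_pow_wt, h16] at hsum
  have hsumℤ : ((16 ^ (n / 8) : ℕ) : ℤ) = #A - #(B \ A) := by exact_mod_cast hsum
  have hpos : 0 < 16 ^ (n / 8) := by positivity
  omega

end GaussSum

theorem stmt4 {n : ℕ} (h8 : 8 ∣ n) (H : Submodule (ZMod 2) (Fin n → ZMod 2))
    (hde : ∀ x ∈ H, 4 ∣ wt x)
    (hone : (fun _ => (1 : ZMod 2) : Fin n → ZMod 2) ∈ H) :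
    ∃ H' : Submodule (ZMod 2) (Fin n → ZMod 2),
      H ≤ H' ∧ (∀ x ∈ H', 4 ∣ wt x) ∧
      (H' : Set (Fin n → ZMod 2)) = dualCode (H' : Set (Fin n → ZMod 2)) := by
  obtain ⟨C, hHC, hC⟩ := Finite.exists_le_maximal (p := IsDoublyEven) hde
  exact ⟨C, hHC, hC.1,
    hC.1.subset_dualCode.antisymm (dualCode_subset_of_maximal h8 hC (hHC hone))⟩
end

section
/- Let α, β ∈ F_2^n be such that wt(α), wt(β) and wt(α+β) are all divisible by 8. Then wt(α·β) is divisible by 4. Consequently, if D ⊆ F_2^n is a triply even linear code and α ∈ D, then α·D = {α·β : β ∈ D} is a doubly even linear code. -/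
lemma wt_key {n : ℕ} (α β : Fin n → ZMod 2) :
    wt α + wt β = wt (α + β) + 2 * wt (α * β) := by
  have h : ∀ a b : ZMod 2,
      ((if a ≠ 0 then 1 else 0) + (if b ≠ 0 then 1 else 0) : ℕ)
        = (if a + b ≠ 0 then 1 else 0) + 2 * (if a * b ≠ 0 then 1 else 0) := by
    decide
  simp only [wt, Finset.card_filter, Pi.add_apply, Pi.mul_apply,
    ← Finset.sum_add_distrib, Finset.mul_sum]
  exact Finset.sum_congr rfl fun i _ => h (α i) (β i)

lemma part1 {n : ℕ} (α β : Fin n → ZMod 2)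
    (hα : 8 ∣ wt α) (hβ : 8 ∣ wt β) (hαβ : 8 ∣ wt (α + β)) : 4 ∣ wt (α * β) := by
  have key := wt_key α β
  have h8 : 8 ∣ 2 * wt (α * β) := by
    have : 2 * wt (α * β) = wt α + wt β - wt (α + β) := by omega
    rw [this]
    exact Nat.dvd_sub (Nat.dvd_add hα hβ) hαβ
  omega

theorem stmt5 {n : ℕ} :
    (∀ α β : Fin n → ZMod 2,
      8 ∣ wt α → 8 ∣ wt β → 8 ∣ wt (α + β) → 4 ∣ wt (α * β)) ∧
    (∀ D : Submodule (ZMod 2) (Fin n → ZMod 2), (∀ x ∈ D, 8 ∣ wt x) →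
      ∀ α ∈ D, ∃ E : Submodule (ZMod 2) (Fin n → ZMod 2),
        (E : Set (Fin n → ZMod 2)) = (fun β => α * β) '' (D : Set (Fin n → ZMod 2)) ∧
        ∀ x ∈ E, 4 ∣ wt x) := by
  refine ⟨part1, fun D hD α hα => ?_⟩
  refine ⟨D.map (LinearMap.mulLeft (ZMod 2) α), ?_, ?_⟩
  · ext x
    simp [LinearMap.mulLeft_apply]
  · intro x hx
    rcases Submodule.mem_map.mp hx with ⟨β, hβ, rfl⟩
    exact part1 α β (hD α hα) (hD β hβ) (hD _ (D.add_mem hα hβ))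
end

section
/- Let C, D ⊆ F_2^n be binary linear codes, and assume that for every α ∈ D the subcode C_α = {γ ∈ C : supp(γ) ⊆ supp(α)} contains a subcode H which is self-dual with respect to α. Then for every δ ∈ C^⊥ and every α ∈ D, the coordinatewise product α·δ belongs to C. -/
/-- The support of a code: the union of the supports of its codewords. -/
def codeSupp {n : ℕ} (S : Set (Fin n → ZMod 2)) : Set (Fin n) := ⋃ h ∈ S, supp h

/-- `H` is self-dual with respect to `β` if `supp H = supp β` and `H^{⊥_β} = H`. -/
def selfDualWrt {n : ℕ} (β : Fin n → ZMod 2) (H : Set (Fin n → ZMod 2)) : Prop :=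
  codeSupp H = supp β ∧ perpWrt β H = H

theorem stmt8 {n : ℕ} (C D : Submodule (ZMod 2) (Fin n → ZMod 2))
    (h : ∀ α ∈ D, ∃ H : Submodule (ZMod 2) (Fin n → ZMod 2),
      (H : Set (Fin n → ZMod 2)) ⊆ {γ | γ ∈ C ∧ supp γ ⊆ supp α} ∧
      selfDualWrt α (H : Set (Fin n → ZMod 2))) :
    ∀ δ : Fin n → ZMod 2, (∀ γ ∈ C, ip δ γ = 0) → ∀ α ∈ D, α * δ ∈ C := by
  intro δ hδ α hα
  obtain ⟨H, hHC, hsupp, hperp⟩ := h α hα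
  have hone : ∀ x : ZMod 2, x ≠ 0 → x = 1 := by decide
  have hmem : α * δ ∈ perpWrt α (H : Set (Fin n → ZMod 2)) := by
    constructor
    · intro i hi
      simp only [supp, Set.mem_setOf_eq, Pi.mul_apply] at hi ⊢
      intro h0; exact hi (by simp [h0])
    · intro g hg
      have hgC := (hHC hg).1
      have hgs := (hHC hg).2
      have h0 := hδ g hgC
      rw [← h0]
      unfold ip
      apply Finset.sum_congr rfl
      intro i _
      by_cases hg0 : g i = 0
      · simp [hg0]
      · have hi : α i = 1 := hone _ (hgs hg0)
        show (α * δ) i * g i = δ i * g i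
        simp [Pi.mul_apply, hi]
  rw [hperp] at hmem
  exact (hHC hmem).1
end

section
/- Let 𝒟 ⊆ F_2^48 be the span of (1^16 0^32), (0^32 1^16), and all (a,a,a) with a ∈ RM(1,4). Then 𝒟^⊥ = {(α,β,γ) ∈ F_2^48 : α, β, γ ∈ F_2^16 each have even weight, and α + β + γ ∈ RM(2,4)}, where vectors in F_2^48 are written as triples of blocks of length 16. -/
/-- The five generators of the first-order Reed–Muller code RM(1,4). -/
def r0 : Fin 16 → ZMod 2 := fun _ => 1
def r1 : Fin 16 → ZMod 2 := fun i => if i.val < 8 then 1 else 0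
def r2 : Fin 16 → ZMod 2 := fun i => if i.val % 8 < 4 then 1 else 0
def r3 : Fin 16 → ZMod 2 := fun i => if i.val % 4 < 2 then 1 else 0
def r4 : Fin 16 → ZMod 2 := fun i => if i.val % 2 = 0 then 1 else 0

/-- The first-order Reed–Muller code RM(1,4) ⊆ F_2^16. -/
def RM14 : Submodule (ZMod 2) (Fin 16 → ZMod 2) :=
  Submodule.span (ZMod 2) {r0, r1, r2, r3, r4}

/-- The triple repetition `(a, a, a)` of a vector of length 16. -/
def tri (a : Fin 16 → ZMod 2) : Fin 48 → ZMod 2 :=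
  fun i => a ⟨i.val % 16, Nat.mod_lt _ (by norm_num)⟩

/-- `(1^16 0^32)`. -/
def e1 : Fin 48 → ZMod 2 := fun i => if i.val < 16 then 1 else 0

/-- `(0^32 1^16)`. -/
def e2 : Fin 48 → ZMod 2 := fun i => if 32 ≤ i.val then 1 else 0

/-- The code 𝒟 ⊆ F_2^48, spanned by `(1^16 0^32)`, `(0^32 1^16)` and all
`(a,a,a)` with `a ∈ RM(1,4)`. -/
def Dcode : Submodule (ZMod 2) (Fin 48 → ZMod 2) :=
  Submodule.span (ZMod 2) ({e1, e2} ∪ tri '' (RM14 : Set (Fin 16 → ZMod 2)))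

/-- The `b`-th block of length 16 of a vector of length 48. -/
def blk (x : Fin 48 → ZMod 2) (b : Fin 3) : Fin 16 → ZMod 2 :=
  fun j => x ⟨16 * b.val + j.val, by have hb := b.isLt; have hj := j.isLt; omega⟩


lemma dual_span {n : ℕ} (S : Set (Fin n → ZMod 2)) (x : Fin n → ZMod 2) :
    x ∈ dualCode ((Submodule.span (ZMod 2) S : Submodule (ZMod 2) _) : Set (Fin n → ZMod 2))
      ↔ ∀ g ∈ S, ip x g = 0 := by
  constructor
  · intro h g hg; exact h g (Submodule.subset_span hg)
  · intro h g hg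
    induction hg using Submodule.span_induction with
    | mem g hg => exact h g hg
    | zero => simp [ip]
    | add a b _ _ ha hb => simp [ip, mul_add, Finset.sum_add_distrib] at *; simp [ha, hb]
    | smul c a _ ha =>
        have : ip x (c • a) = c * ip x a := by
          simp [ip, smul_eq_mul, mul_left_comm, Finset.mul_sum]
        rw [this, ha, mul_zero]

lemma sum_eq_wt {n : ℕ} (α : Fin n → ZMod 2) :
    ∑ i, α i = (wt α : ZMod 2) := by
  rw [wt, ← Finset.sum_filter_ne_zero Finset.univ, Finset.card_eq_sum_ones, Nat.cast_sum]
  apply Finset.sum_congr rfl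
  intro i hi
  have h := (Finset.mem_filter.mp hi).2
  revert h; generalize α i = a; revert a; decide


lemma even_iff {n : ℕ} (α : Fin n → ZMod 2) : 2 ∣ wt α ↔ ∑ i, α i = 0 := by
  rw [sum_eq_wt, ZMod.natCast_eq_zero_iff]

def eqv48 : Fin 3 × Fin 16 ≃ Fin 48 where
  toFun p := ⟨16 * p.1.val + p.2.val, by have := p.1.isLt; have := p.2.isLt; omega⟩
  invFun i := (⟨i.val / 16, by have := i.isLt; omega⟩, ⟨i.val % 16, by omega⟩)
  left_inv := by
    rintro ⟨⟨b, hb⟩, ⟨j, hj⟩⟩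
    ext
    · simp; omega
    · simp; omega
  right_inv := by
    rintro ⟨i, hi⟩
    simp; omega

lemma sum48 (f : Fin 48 → ZMod 2) :
    ∑ i, f i = ∑ j : Fin 16,
      (f ⟨j.val, by have := j.isLt; omega⟩ + f ⟨16 + j.val, by have := j.isLt; omega⟩ +
        f ⟨32 + j.val, by have := j.isLt; omega⟩) := by
  rw [← Equiv.sum_comp eqv48 f, Fintype.sum_prod_type, Fin.sum_univ_three,
    ← Finset.sum_add_distrib, ← Finset.sum_add_distrib]
  refine Finset.sum_congr rfl fun j _ => ?_
  simp [eqv48]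

lemma ip_tri (x : Fin 48 → ZMod 2) (a : Fin 16 → ZMod 2) :
    ip x (tri a) = ip (blk x 0 + blk x 1 + blk x 2) a := by
  rw [ip, sum48 (fun i => x i * tri a i), ip]
  refine Finset.sum_congr rfl fun j _ => ?_
  have h0 : j.val % 16 = j.val := Nat.mod_eq_of_lt j.isLt
  have h2 : (32 + j.val) % 16 = j.val := by omega
  simp [tri, blk, add_mul, Pi.add_apply, Nat.add_mod_left, h0, h2]

lemma ip_e1 (x : Fin 48 → ZMod 2) : ip x e1 = ∑ j, blk x 0 j := by
  rw [ip, sum48 (fun i => x i * e1 i)]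
  refine Finset.sum_congr rfl fun j _ => ?_
  have := j.isLt
  simp [e1, blk]
  omega

lemma ip_e2 (x : Fin 48 → ZMod 2) : ip x e2 = ∑ j, blk x 2 j := by
  rw [ip, sum48 (fun i => x i * e2 i)]
  refine Finset.sum_congr rfl fun j _ => ?_
  have := j.isLt
  have h1 : ¬ 32 ≤ j.val := by omega
  have h2 : ¬ 32 ≤ 16 + j.val := by omega
  simp [e2, blk, h1, h2]

lemma r0_mem : r0 ∈ RM14 := Submodule.subset_span (Set.mem_insert _ _)

lemma ip_r0 (s : Fin 16 → ZMod 2) : ip s r0 = ∑ j, s j := by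
  simp [ip, r0]

theorem stmt11aux (x : Fin 48 → ZMod 2) :
    x ∈ dualCode (Dcode : Set (Fin 48 → ZMod 2)) ↔
      (2 ∣ wt (blk x 0) ∧ 2 ∣ wt (blk x 1) ∧ 2 ∣ wt (blk x 2) ∧
        blk x 0 + blk x 1 + blk x 2 ∈ dualCode (RM14 : Set (Fin 16 → ZMod 2))) := by
  unfold Dcode
  rw [dual_span]
  set s := blk x 0 + blk x 1 + blk x 2 with hs
  have hsum : ip s r0 = (∑ j, blk x 0 j) + (∑ j, blk x 1 j) + (∑ j, blk x 2 j) := by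
    rw [ip_r0, hs]
    simp [Finset.sum_add_distrib]
  constructor
  · intro h
    have he1 : ip x e1 = 0 := h e1 (Or.inl (Set.mem_insert _ _))
    have he2 : ip x e2 = 0 := h e2 (Or.inl (Set.mem_insert_of_mem _ rfl))
    have hQ : ∀ a ∈ RM14, ip s a = 0 := by
      intro a ha
      rw [← ip_tri]
      exact h (tri a) (Or.inr ⟨a, ha, rfl⟩)
    have p0 : ∑ j, blk x 0 j = 0 := by rw [← ip_e1]; exact he1
    have p2 : ∑ j, blk x 2 j = 0 := by rw [← ip_e2]; exact he2
    have hr0 := hQ r0 r0_mem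
    rw [hsum, p0, p2] at hr0
    refine ⟨(even_iff _).mpr p0, (even_iff _).mpr (by simpa using hr0),
      (even_iff _).mpr p2, hQ⟩
  · rintro ⟨d0, _, d2, hQ⟩ g hg
    rcases hg with hg | ⟨a, ha, rfl⟩
    · rcases hg with rfl | rfl
      · rw [ip_e1]; exact (even_iff _).mp d0
      · rw [ip_e2]; exact (even_iff _).mp d2
    · rw [ip_tri]
      exact hQ a ha

theorem stmt11 (x : Fin 48 → ZMod 2) :
    x ∈ dualCode (Dcode : Set (Fin 48 → ZMod 2)) ↔
      (2 ∣ wt (blk x 0) ∧ 2 ∣ wt (blk x 1) ∧ 2 ∣ wt (blk x 2) ∧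
        blk x 0 + blk x 1 + blk x 2 ∈ dualCode (RM14 : Set (Fin 16 → ZMod 2))) := stmt11aux x
end

section
/- Let 𝒟 ⊆ F_2^48 be the span of (1^16 0^32), (0^32 1^16), and all (a,a,a) with a ∈ RM(1,4); let 𝒞 = 𝒟^⊥; let ξ = (110000001100000001100000011000001010000010100000) ∈ F_2^48 and κ = (100000001000000000000000000000000000000000000000) ∈ F_2^48. Then supp(κ) ⊆ supp(ξ), and for every α ∈ 𝒞_ξ = {β ∈ 𝒞 : supp(β) ⊆ supp(ξ)}, the weight wt(α) is even, and ⟨α,κ⟩ = 0 in F_2 if and only if wt(α) ≡ 0 (mod 4) (i.e. (−1)^{⟨α,κ⟩} = (−1)^{wt(α)/2}). -/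
/-- ξ = (1100 0000 1100 0000 | 0110 0000 0110 0000 | 1010 0000 1010 0000) ∈ F_2^48. -/
def xiv : Fin 48 → ZMod 2 :=
  fun i => if i.val ∈ [0, 1, 8, 9, 17, 18, 25, 26, 32, 34, 40, 42] then 1 else 0

/-- κ = (1000 0000 1000 0000 | 0^16 | 0^16) ∈ F_2^48. -/
def kap : Fin 48 → ZMod 2 := fun i => if i.val = 0 ∨ i.val = 8 then 1 else 0
def S12 : Finset (Fin 48) := {0, 1, 8, 9, 17, 18, 25, 26, 32, 34, 40, 42}

lemma sum_S12 {M : Type*} [AddCommMonoid M] (f : Fin 48 → M) :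
    ∑ i ∈ S12, f i = f 0 + f 1 + f 8 + f 9 + f 17 + f 18 + f 25 + f 26 + f 32 + f 34 + f 40 + f 42 := by
  rw [S12]
  rw [Finset.sum_insert (by decide), Finset.sum_insert (by decide), Finset.sum_insert (by decide),
      Finset.sum_insert (by decide), Finset.sum_insert (by decide), Finset.sum_insert (by decide),
      Finset.sum_insert (by decide), Finset.sum_insert (by decide), Finset.sum_insert (by decide),
      Finset.sum_insert (by decide), Finset.sum_insert (by decide), Finset.sum_singleton]
  abel

lemma ip_restrict (α γ : Fin 48 → ZMod 2) (h : ∀ i : Fin 48, i ∉ S12 → α i = 0) :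
    ip α γ = ∑ i ∈ S12, α i * γ i := by
  rw [ip]
  refine (Finset.sum_subset (Finset.subset_univ S12) ?_).symm
  intro i _ hi; rw [h i hi, zero_mul]

lemma wt_restrict (α : Fin 48 → ZMod 2) (h : ∀ i : Fin 48, i ∉ S12 → α i = 0) :
    wt α = ∑ i ∈ S12, if α i ≠ 0 then 1 else 0 := by
  have hf : Finset.univ.filter (fun i => α i ≠ 0) = S12.filter (fun i => α i ≠ 0) := by
    ext i
    simp only [Finset.mem_filter, Finset.mem_univ, true_and]
    constructor
    · intro hi; exact ⟨by by_contra hS; exact hi (h i hS), hi⟩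
    · exact fun hi => hi.2
  rw [wt, hf, Finset.card_filter]

lemma key : ∀ a b c d e f g h p q s t : ZMod 2,
    a + b + c + d = 0 → p + q + s + t = 0 →
    a + b + c + d + e + f + g + h + p + q + s + t = 0 →
    a + b + e + f + p + q = 0 →
    a + b + c + d + e + g + p + s = 0 →
    a + c + f + h + p + q + s + t = 0 →
    2 ∣ ((if a = 0 then 0 else 1) + (if b = 0 then 0 else 1) + (if c = 0 then 0 else 1) + (if d = 0 then 0 else 1) + (if e = 0 then 0 else 1) + (if f = 0 then 0 else 1) + (if g = 0 then 0 else 1) + (if h = 0 then 0 else 1) + (if p = 0 then 0 else 1) + (if q = 0 then 0 else 1) + (if s = 0 then 0 else 1) + (if t = 0 then 0 else 1) : ℕ) ∧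
      (a + c = 0 ↔ ((if a = 0 then 0 else 1) + (if b = 0 then 0 else 1) + (if c = 0 then 0 else 1) + (if d = 0 then 0 else 1) + (if e = 0 then 0 else 1) + (if f = 0 then 0 else 1) + (if g = 0 then 0 else 1) + (if h = 0 then 0 else 1) + (if p = 0 then 0 else 1) + (if q = 0 then 0 else 1) + (if s = 0 then 0 else 1) + (if t = 0 then 0 else 1) : ℕ) % 4 = 0) := by
  decide

lemma val0 : ((0 : Fin 48) : ℕ) = 0 := rfl
lemma val1 : ((1 : Fin 48) : ℕ) = 1 := rfl
lemma val8 : ((8 : Fin 48) : ℕ) = 8 := rfl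
lemma val9 : ((9 : Fin 48) : ℕ) = 9 := rfl
lemma val17 : ((17 : Fin 48) : ℕ) = 17 := rfl
lemma val18 : ((18 : Fin 48) : ℕ) = 18 := rfl
lemma val25 : ((25 : Fin 48) : ℕ) = 25 := rfl
lemma val26 : ((26 : Fin 48) : ℕ) = 26 := rfl
lemma val32 : ((32 : Fin 48) : ℕ) = 32 := rfl
lemma val34 : ((34 : Fin 48) : ℕ) = 34 := rfl
lemma val40 : ((40 : Fin 48) : ℕ) = 40 := rfl
lemma val42 : ((42 : Fin 48) : ℕ) = 42 := rfl

theorem stmt18 :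
    supp kap ⊆ supp xiv ∧
    ∀ α ∈ dualCode (Dcode : Set (Fin 48 → ZMod 2)),
      supp α ⊆ supp xiv →
        2 ∣ wt α ∧ (ip α kap = 0 ↔ wt α % 4 = 0) := by
  constructor
  · intro i hi
    simp only [supp, Set.mem_setOf_eq] at hi ⊢
    revert hi
    fin_cases i <;> decide
  · intro α hα hsupp
    have h0 : ∀ i : Fin 48, i ∉ S12 → α i = 0 := by
      intro i hi
      by_contra hne
      have hx : xiv i ≠ 0 := hsupp hne
      apply hx
      revert hi
      fin_cases i <;> decide
    have he1 : ip α e1 = 0 := hα e1 (Submodule.subset_span (Set.mem_union_left _ (by simp)))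
    have he2 : ip α e2 = 0 := hα e2 (Submodule.subset_span (Set.mem_union_left _ (by simp)))
    have ht0 : ip α (tri r0) = 0 :=
      hα _ (Submodule.subset_span (Set.mem_union_right _ ⟨r0, Submodule.subset_span (by simp), rfl⟩))
    have ht1 : ip α (tri r1) = 0 :=
      hα _ (Submodule.subset_span (Set.mem_union_right _ ⟨r1, Submodule.subset_span (by simp), rfl⟩))
    have ht3 : ip α (tri r3) = 0 :=
      hα _ (Submodule.subset_span (Set.mem_union_right _ ⟨r3, Submodule.subset_span (by simp), rfl⟩))
    have ht4 : ip α (tri r4) = 0 :=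
      hα _ (Submodule.subset_span (Set.mem_union_right _ ⟨r4, Submodule.subset_span (by simp), rfl⟩))
    rw [ip_restrict α e1 h0, sum_S12] at he1
    rw [ip_restrict α e2 h0, sum_S12] at he2
    rw [ip_restrict α (tri r0) h0, sum_S12] at ht0
    rw [ip_restrict α (tri r1) h0, sum_S12] at ht1
    rw [ip_restrict α (tri r3) h0, sum_S12] at ht3
    rw [ip_restrict α (tri r4) h0, sum_S12] at ht4
    simp only [e1, e2, tri, r0, r1, r3, r4, val0, val1, val8, val9, val17, val18, val25, val26,
      val32, val34, val40, val42] at he1 he2 ht0 ht1 ht3 ht4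
    norm_num at he1 he2 ht0 ht1 ht3 ht4
    rw [wt_restrict α h0, sum_S12, ip_restrict α kap h0, sum_S12]
    simp only [kap, val0, val1, val8, val9, val17, val18, val25, val26, val32, val34, val40, val42]
    norm_num
    exact key (α 0) (α 1) (α 8) (α 9) (α 17) (α 18) (α 25) (α 26) (α 32) (α 34) (α 40) (α 42)
      he1 he2 ht0 ht1 ht3 ht4
end
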